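/- Let (E,d) be a Polish space, (ℙ_n) a sequence of Borel probability measures converging weakly to ℙ, and (Φ_n) a uniformly bounded sequence of continuous functions E → ℝ converging uniformly on every compact subset of E to a continuous function Φ. Then ∫_E Φ_n dℙ_n → ∫_E Φ dℙ. -/

import Mathlib

/-! Weak convergence makes `{ℙ_n}` tight (Prokhorov), so one compact set `K` carries all but `η`
of every `ℙ_n`. On `K` the integrands `Φ_n - Φ` are uniformly small, off `K` they are bounded
by `2C`; hence `∫ (Φ_n - Φ) dℙ_n → 0`, while `∫ Φ dℙ_n → ∫ Φ dℙ` by weak convergence. -/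

open MeasureTheory Filter Set
open scoped Topology

lemma TendstoUniformlyOn.sub_tendstoUniformlyOn_zero {α ι G : Type*} [SeminormedAddCommGroup G]
    {F : ι → α → G} {f : α → G} {l : Filter ι} {s : Set α} (h : TendstoUniformlyOn F f l s) :
    TendstoUniformlyOn (fun i x ↦ F i x - f x) 0 l s := by
  refine Metric.tendstoUniformlyOn_iff.mpr fun ε hε ↦ ?_
  filter_upwards [Metric.tendstoUniformlyOn_iff.mp h ε hε] with i hi x hx
  simpa [dist_eq_norm, norm_sub_rev] using hi x hx

lemma isTightMeasureSet_range_of_tendsto {X : Type*} [MeasurableSpace X] [PseudoMetricSpace X]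
    [CompleteSpace X] [SecondCountableTopology X] [OpensMeasurableSpace X]
    {μ : ℕ → ProbabilityMeasure X} {ν : ProbabilityMeasure X} (hμ : Tendsto μ atTop (𝓝 ν)) :
    IsTightMeasureSet (range fun n ↦ (μ n : Measure X)) := by
  have hcomp : IsCompact (closure (range μ)) :=
    hμ.isCompact_insert_range.closure_of_subset (subset_insert _ _)
  convert isTightMeasureSet_of_isCompact_closure hcomp using 1
  ext; simp

theorem tendsto_integral_of_isTightMeasureSet {X ι G : Type*} [MeasurableSpace X]
    [TopologicalSpace X] [T2Space X] [OpensMeasurableSpace X]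
    [NormedAddCommGroup G] [NormedSpace ℝ G] {l : Filter ι}
    {μ : ι → Measure X} [∀ i, IsProbabilityMeasure (μ i)] (hμ : IsTightMeasureSet (range μ))
    {g : ι → X → G} {C : ℝ} (hgm : ∀ i, AEStronglyMeasurable (g i) (μ i))
    (hgC : ∀ i x, ‖g i x‖ ≤ C) (hg : ∀ K, IsCompact K → TendstoUniformlyOn g 0 l K) :
    Tendsto (fun i ↦ ∫ x, g i x ∂μ i) l (𝓝 0) := by
  rw [Metric.tendsto_nhds]
  intro ε hε
  obtain ⟨η, hη, hηC⟩ : ∃ η, 0 < η ∧ η * |C| < ε / 2 := by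
    refine ⟨ε / (2 * (|C| + 1)), by positivity, ?_⟩
    calc ε / (2 * (|C| + 1)) * |C| < ε / (2 * (|C| + 1)) * (|C| + 1) := by gcongr; linarith
      _ = ε / 2 := by field_simp
  obtain ⟨K, hK, hKμ⟩ :=
    isTightMeasureSet_iff_exists_isCompact_measure_compl_le.mp hμ (ENNReal.ofReal η) (by simpa)
  filter_upwards [Metric.tendstoUniformlyOn_iff.mp (hg K hK) (ε / 2) (by positivity)] with i hi
  have hint : Integrable (g i) (μ i) := .of_bound (hgm i) C (ae_of_all _ (hgC i))
  have hout : ‖∫ x, g i x ∂μ i - ∫ x in K, g i x ∂μ i‖ ≤ (μ i).real Kᶜ * C :=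
    norm_integral_sub_setIntegral_le (ae_of_all _ (hgC i)) hK.measurableSet hint
  have hin : ‖∫ x in K, g i x ∂μ i‖ ≤ ε / 2 * (μ i).real K :=
    norm_setIntegral_le_of_norm_le_const (measure_lt_top _ _) fun x hx ↦ by
      simpa using (hi x hx).le
  have hKc : (μ i).real Kᶜ ≤ η := ENNReal.toReal_le_of_le_ofReal hη.le (hKμ _ (mem_range_self i))
  rw [dist_zero_right]
  calc ‖∫ x, g i x ∂μ i‖
      ≤ ‖∫ x in K, g i x ∂μ i‖ + ‖∫ x, g i x ∂μ i - ∫ x in K, g i x ∂μ i‖ := norm_le_insert' _ _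
    _ ≤ ε / 2 * 1 + (μ i).real Kᶜ * |C| := by
        gcongr
        · exact hin.trans (by gcongr; exact measureReal_le_one)
        · exact hout.trans (by gcongr; exact le_abs_self C)
    _ ≤ ε / 2 + η * |C| := by gcongr; simp
    _ < ε := by linarith

/-- If `ℙ_n → ℙ` weakly on a Polish space and `Φ_n → Φ` uniformly on compact sets
with `(Φ_n)` uniformly bounded and continuous, then `∫ Φ_n dℙ_n → ∫ Φ dℙ`. -/
theorem integral_tendsto_of_weak_convergence_and_loc_uniform {E : Type*}
    [MetricSpace E] [CompleteSpace E] [SecondCountableTopology E]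
    [MeasurableSpace E] [BorelSpace E]
    (P : ℕ → ProbabilityMeasure E) (Plim : ProbabilityMeasure E)
    (hweak : Tendsto P atTop (𝓝 Plim))
    (Φ : ℕ → E → ℝ) (Φlim : E → ℝ)
    (hcont : ∀ n, Continuous (Φ n)) (hlimcont : Continuous Φlim)
    (C : ℝ) (hbd : ∀ n x, |Φ n x| ≤ C)
    (hunif : ∀ K : Set E, IsCompact K → TendstoUniformlyOn Φ Φlim atTop K) :
    Tendsto (fun n => ∫ x, Φ n x ∂(P n : Measure E)) atTop
      (𝓝 (∫ x, Φlim x ∂(Plim : Measure E))) := by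
  have hlim_bd (x : E) : |Φlim x| ≤ C :=
    le_of_tendsto ((hunif {x} isCompact_singleton).tendsto_at rfl).abs
      (Eventually.of_forall fun n ↦ hbd n x)
  have hint (μ : ProbabilityMeasure E) {f : E → ℝ} (hf : Continuous f) (hfC : ∀ x, |f x| ≤ C) :
      Integrable f μ :=
    .of_bound hf.aestronglyMeasurable C (ae_of_all _ hfC)
  have hlim : Tendsto (fun n ↦ ∫ x, Φlim x ∂(P n : Measure E)) atTop
      (𝓝 (∫ x, Φlim x ∂(Plim : Measure E))) :=
    ProbabilityMeasure.tendsto_iff_forall_integral_tendsto.mp hweak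
      (.ofNormedAddCommGroup Φlim hlimcont C hlim_bd)
  have hdiff : Tendsto (fun n ↦ ∫ x, (Φ n x - Φlim x) ∂(P n : Measure E)) atTop (𝓝 0) :=
    tendsto_integral_of_isTightMeasureSet (isTightMeasureSet_range_of_tendsto hweak)
      (fun n ↦ ((hcont n).sub hlimcont).aestronglyMeasurable) (C := C + C)
      (fun n x ↦ (abs_sub _ _).trans (add_le_add (hbd n x) (hlim_bd x)))
      fun K hK ↦ (hunif K hK).sub_tendstoUniformlyOn_zero
  refine (zero_add (∫ x, Φlim x ∂(Plim : Measure E)) ▸ hdiff.add hlim).congr fun n ↦ ?_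
  rw [integral_sub (hint _ (hcont n) (hbd n)) (hint _ hlimcont hlim_bd), sub_add_cancel]
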